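/- arXiv:2005.03270 — 2 statements merged into one kernel-verified Lean document; each statement's English description precedes it below -/
import Mathlib

section
/- Let n ∈ ℕ with n ≥ 1 and let g : ℝ^n → ℝ be real analytic on all of ℝ^n. If g is not identically zero, then the zero set {x ∈ ℝ^n : g(x) = 0} has Lebesgue measure zero. -/
open MeasureTheory

/-- A real analytic function on `ℝ` which is not identically zero has countable zero set,
hence null zero set. -/
lemma dim1_zero_set (f : ℝ → ℝ) (hf : ∀ x, AnalyticAt ℝ f x) (hne : ∃ x, f x ≠ 0) :
    volume {x : ℝ | f x = 0} = 0 := by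
  set Z : Set ℝ := {x | f x = 0} with hZ
  have hcount : Z.Countable := by
    have hdisc : DiscreteTopology Z := by
      rw [discreteTopology_subtype_iff]
      intro x hx
      rcases (hf x).eventually_eq_zero_or_eventually_ne_zero with h | h
      · exfalso
        have hfreq : ∃ᶠ z in nhdsWithin x {x}ᶜ, f z = (fun _ => (0 : ℝ)) z :=
          (h.filter_mono nhdsWithin_le_nhds).frequently
        have := AnalyticOnNhd.eq_of_frequently_eq (fun z _ => hf z)
          (fun z _ => analyticAt_const) hfreq
        obtain ⟨y, hy⟩ := hne
        exact hy (congrFun this y)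
      · rw [← Filter.empty_mem_iff_bot]
        have h1 : {z | f z ≠ 0} ∈ nhdsWithin x {x}ᶜ ⊓ Filter.principal Z :=
          Filter.mem_inf_of_left h
        have h2 : Z ∈ nhdsWithin x {x}ᶜ ⊓ Filter.principal Z :=
          Filter.mem_inf_of_right (Filter.mem_principal_self Z)
        have : {z | f z ≠ 0} ∩ Z ⊆ ∅ := fun z ⟨hz1, hz2⟩ => (hz1 hz2).elim
        exact Filter.mem_of_superset (Filter.inter_mem h1 h2) this
    have : Countable Z := by
      have : TopologicalSpace.SeparableSpace Z := by infer_instance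
      exact (TopologicalSpace.separableSpace_iff_countable).mp this
    exact Set.countable_coe_iff.mp this
  exact hcount.measure_zero _

private lemma cons_analytic_pair {n : ℕ} (p : ℝ × (Fin n → ℝ)) :
    AnalyticAt ℝ (fun q : ℝ × (Fin n → ℝ) => (Fin.cons q.1 q.2 : Fin (n + 1) → ℝ)) p := by
  apply AnalyticAt.pi
  intro i
  refine Fin.cases ?_ (fun j => ?_) i
  · simp only [Fin.cons_zero]
    exact (ContinuousLinearMap.fst ℝ ℝ (Fin n → ℝ)).analyticAt p
  · simp only [Fin.cons_succ]
    exact ((ContinuousLinearMap.proj j).comp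
      (ContinuousLinearMap.snd ℝ ℝ (Fin n → ℝ))).analyticAt p

private lemma cons_analytic_fst {n : ℕ} (y : Fin n → ℝ) (t : ℝ) :
    AnalyticAt ℝ (fun s : ℝ => (Fin.cons s y : Fin (n + 1) → ℝ)) t := by
  apply AnalyticAt.pi
  intro i
  refine Fin.cases ?_ (fun j => ?_) i
  · simp only [Fin.cons_zero]; exact (analyticAt_id : AnalyticAt ℝ (id : ℝ → ℝ) t)
  · simp only [Fin.cons_succ]; exact analyticAt_const

private lemma cons_analytic_snd {n : ℕ} (t : ℝ) (y : Fin n → ℝ) :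
    AnalyticAt ℝ (fun z : Fin n → ℝ => (Fin.cons t z : Fin (n + 1) → ℝ)) y := by
  apply AnalyticAt.pi
  intro i
  refine Fin.cases ?_ (fun j => ?_) i
  · simp only [Fin.cons_zero]; exact analyticAt_const
  · simp only [Fin.cons_succ]
    exact (ContinuousLinearMap.proj (R := ℝ) (φ := fun _ : Fin n => ℝ) j).analyticAt y

lemma analytic_zero_set_null : ∀ (n : ℕ) (g : (Fin n → ℝ) → ℝ),
    (∀ x, AnalyticAt ℝ g x) → (∃ x, g x ≠ 0) → volume {x : Fin n → ℝ | g x = 0} = 0 := by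
  intro n
  induction n with
  | zero =>
    intro g _ hne
    obtain ⟨x₀, hx₀⟩ := hne
    have : {x : Fin 0 → ℝ | g x = 0} = ∅ := by
      ext x
      simp only [Set.mem_setOf_eq, Set.mem_empty_iff_false, iff_false]
      intro hx
      exact hx₀ (Subsingleton.elim x x₀ ▸ hx)
    simp [this]
  | succ n ih =>
    intro g hg hne
    -- the function on the product
    set h : ℝ × (Fin n → ℝ) → ℝ := fun p => g (Fin.cons p.1 p.2) with hh
    have hha : ∀ p, AnalyticAt ℝ h p := fun p =>
      AnalyticAt.comp (f := fun q : ℝ × (Fin n → ℝ) => (Fin.cons q.1 q.2 : Fin (n + 1) → ℝ))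
        (hg (Fin.cons p.1 p.2)) (cons_analytic_pair p)
    set S : Set (ℝ × (Fin n → ℝ)) := {p | h p = 0} with hS
    have hScl : IsClosed S := by
      have hc : Continuous h := continuous_iff_continuousAt.2 fun p => (hha p).continuousAt
      exact isClosed_eq hc continuous_const
    have hSm : MeasurableSet S := hScl.measurableSet
    -- transfer the zero set
    set e := MeasurableEquiv.piFinSuccAbove (fun _ : Fin (n + 1) => ℝ) 0 with he
    have hvp : MeasurePreserving e volume volume :=
      volume_preserving_piFinSuccAbove (fun _ : Fin (n + 1) => ℝ) 0
    have hpre : {x : Fin (n + 1) → ℝ | g x = 0} = e ⁻¹' S := by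
      ext x
      simp only [Set.mem_setOf_eq, Set.mem_preimage, hS, hh, he,
        MeasurableEquiv.piFinSuccAbove_apply, Fin.insertNthEquiv, Equiv.coe_fn_symm_mk,
        Fin.removeNth_zero, Fin.cons_self_tail]
    rw [hpre, hvp.measure_preimage hSm.nullMeasurableSet]
    -- Fubini
    rw [show (volume : Measure (ℝ × (Fin n → ℝ))) = (volume : Measure ℝ).prod volume from rfl,
      Measure.prod_apply hSm]
    -- the bad set of first coordinates is null
    obtain ⟨x₀, hx₀⟩ := hne
    set y₀ : Fin n → ℝ := Fin.tail x₀ with hy₀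
    set f : ℝ → ℝ := fun t => g (Fin.cons t y₀) with hf
    have hfa : ∀ t, AnalyticAt ℝ f t := fun t =>
      AnalyticAt.comp (f := fun s : ℝ => (Fin.cons s y₀ : Fin (n + 1) → ℝ))
        (hg (Fin.cons t y₀)) (cons_analytic_fst y₀ t)
    have hfne : ∃ t, f t ≠ 0 := by
      refine ⟨x₀ 0, ?_⟩
      simpa [hf, hy₀, Fin.cons_self_tail] using hx₀
    have hB : volume {t : ℝ | f t = 0} = 0 := dim1_zero_set f hfa hfne
    have hae : ∀ᵐ t : ℝ, volume (Prod.mk t ⁻¹' S) = 0 := by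
      filter_upwards [measure_eq_zero_iff_ae_notMem.mp hB] with t ht
      have hslice : Prod.mk t ⁻¹' S = {y : Fin n → ℝ | (fun z => g (Fin.cons t z)) y = 0} := by
        ext y; simp [hS, hh]
      rw [hslice]
      exact ih (fun z => g (Fin.cons t z))
        (fun y => AnalyticAt.comp (f := fun z : Fin n → ℝ => (Fin.cons t z : Fin (n + 1) → ℝ))
          (hg (Fin.cons t y)) (cons_analytic_snd t y)) ⟨y₀, ht⟩
    rw [lintegral_congr_ae (hae.mono fun t ht => ht)]
    simp

/-- If `g : ℝ^n → ℝ` is real analytic on all of `ℝ^n` and not identically zero,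
then its zero set has Lebesgue measure zero. -/
theorem stmt_0 (n : ℕ) (hn : 1 ≤ n) (g : (Fin n → ℝ) → ℝ)
    (hg : ∀ x, AnalyticAt ℝ g x) (hne : ∃ x, g x ≠ 0) :
    volume {x : Fin n → ℝ | g x = 0} = 0 :=
  analytic_zero_set_null n g hg hne
end

section
/- Let d ∈ ℕ with d ≥ 1, let x_0 ∈ ℝ^d, and let ζ_0, ζ_1, ζ_2, … be an i.i.d. sequence of standard Gaussian random vectors on ℝ^d. For each t ∈ ℕ let f_t : ℝ^d → ℝ^d and σ_t : ℝ^d → ℝ^{d×d} be measurable, assume σ_0(x_0) is invertible, and assume that for each t ≥ 1 the set {x ∈ ℝ^d : σ_t(x) is not invertible} has Lebesgue measure zero. Define recursively x_{t+1} = f_t(x_t) + σ_t(x_t)ζ_t. Then for every t ≥ 1 the law of x_t is absolutely continuous with respect to Lebesgue measure on ℝ^d; in particular, for every Borel set S_0 ⊂ ℝ^d of Lebesgue measure zero, P(x_t ∈ S_0) = 0. -/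
open MeasureTheory ProbabilityTheory Matrix

/-!
The state `x t` is a measurable function of `ζ 0, …, ζ (t-1)`, hence independent of `ζ t`.
So the law of `x (t+1)` is the law of `x t` integrated against the laws of the affine
images `f_t(y) + σ_t(y) ζ` of a Gaussian vector; each of these is absolutely continuous as
soon as `σ_t(y)` is invertible, because an invertible affine map pulls Lebesgue-null sets back
to null sets. The set of `y` with `σ_t(y)` singular is null for the law of `x t`: for `t = 0`
that law is the Dirac mass at `x₀`, and for `t ≥ 1` it is absolutely continuous by induction.
-/

theorem MeasureTheory.Measure.AbsolutelyContinuous.pi_fin :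
    ∀ {n : ℕ} {α : Fin n → Type*} [∀ i, MeasurableSpace (α i)] {μ ν : ∀ i, Measure (α i)}
      [∀ i, SigmaFinite (μ i)] [∀ i, SigmaFinite (ν i)],
      (∀ i, μ i ≪ ν i) → Measure.pi μ ≪ Measure.pi ν
  | 0, _, _, μ, ν, _, _, _ => by rw [Measure.pi_of_empty μ, Measure.pi_of_empty ν]
  | n + 1, α, _, μ, ν, _, _, h => by
    let e := MeasurableEquiv.piFinSuccAbove α 0
    rw [← ((measurePreserving_piFinSuccAbove μ 0).symm e).map_eq,
      ← ((measurePreserving_piFinSuccAbove ν 0).symm e).map_eq]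
    exact ((h 0).prod (pi_fin fun i => h _)).map e.symm.measurable

theorem Matrix.addHaar_preimage_add_mulVec {ι : Type*} [Fintype ι] [DecidableEq ι]
    (μ : Measure (ι → ℝ)) [μ.IsAddHaarMeasure] (c : ι → ℝ) {A : Matrix ι ι ℝ}
    (hA : IsUnit A.det) (S : Set (ι → ℝ)) :
    μ ((fun v => c + A *ᵥ v) ⁻¹' S) = ENNReal.ofReal |A.det⁻¹| * μ S := by
  have hdet : LinearMap.det (toLin' A) ≠ 0 := by rw [LinearMap.det_toLin']; exact hA.ne_zero
  have := Measure.addHaar_preimage_linearMap μ hdet ((fun v => c + v) ⁻¹' S)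
  rw [measure_preimage_add, LinearMap.det_toLin'] at this
  exact this

theorem MeasureTheory.Measure.map_prod_absolutelyContinuous {α β γ : Type*} [MeasurableSpace α]
    [MeasurableSpace β] [MeasurableSpace γ] {μ : Measure α} {ν : Measure β} [SFinite ν]
    {ρ : Measure γ} {g : α × β → γ} (hg : Measurable g)
    (h : ∀ᵐ a ∂μ, ν.map (fun b => g (a, b)) ≪ ρ) : (μ.prod ν).map g ≪ ρ := by
  refine AbsolutelyContinuous.mk fun S hS hS0 => ?_
  have hfiber : ∀ᵐ a ∂μ, ν (Prod.mk a ⁻¹' (g ⁻¹' S)) = 0 := h.mono fun a ha => by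
    have hga : Measurable fun b => g (a, b) := hg.comp measurable_prodMk_left
    exact (map_apply hga hS).symm.trans (ha hS0)
  rw [map_apply hg hS, prod_apply (hg hS), lintegral_congr_ae hfiber, lintegral_zero]

theorem ProbabilityTheory.IndepFun.map_absolutelyContinuous {Ω α β γ : Type*}
    [MeasurableSpace Ω] [MeasurableSpace α] [MeasurableSpace β] [MeasurableSpace γ]
    {P : Measure Ω} [IsFiniteMeasure P] {X : Ω → α} {Z : Ω → β} (hXZ : IndepFun X Z P)
    (hX : Measurable X) (hZ : Measurable Z) {ρ : Measure γ} {g : α × β → γ} (hg : Measurable g)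
    (h : ∀ᵐ a ∂P.map X, (P.map Z).map (fun b => g (a, b)) ≪ ρ) :
    P.map (fun ω => g (X ω, Z ω)) ≪ ρ := by
  have hlaw := IndepFun.map_prod_eq_prod_map_map hX.aemeasurable hZ.aemeasurable hXZ
  rw [← Function.comp_def g, ← Measure.map_map hg (hX.prodMk hZ), hlaw]
  exact Measure.map_prod_absolutelyContinuous hg h

theorem ProbabilityTheory.iIndepFun.indepFun_of_measurable_iSup {Ω ι α β : Type*}
    [MeasurableSpace Ω] [MeasurableSpace α] [mβ : MeasurableSpace β] {P : Measure Ω}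
    {ζ : ι → Ω → β} (hζm : ∀ i, Measurable (ζ i)) (hζ : iIndepFun ζ P) {S : Set ι} {i : ι}
    (hi : i ∉ S) {X : Ω → α} (hX : Measurable[⨆ j ∈ S, mβ.comap (ζ j)] X) :
    IndepFun X (ζ i) P := by
  have h := indep_iSup_of_disjoint (fun j => (hζm j).comap_le) hζ.iIndep
    (Set.disjoint_singleton_right.2 hi)
  simp only [Set.mem_singleton_iff, iSup_iSup_eq_left] at h
  exact indep_of_indep_of_le_left h hX.comap_le

theorem measurable_iSup_comap_of_recursion {Ω α β : Type*} [MeasurableSpace α]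
    [mβ : MeasurableSpace β] {ζ : ℕ → Ω → β} {x : ℕ → Ω → α} {F : ℕ → α × β → α}
    (hF : ∀ t, Measurable (F t)) (x₀ : α) (hx0 : ∀ ω, x 0 ω = x₀)
    (hrec : ∀ t ω, x (t + 1) ω = F t (x t ω, ζ t ω)) (t : ℕ) :
    Measurable[⨆ i ∈ Set.Iio t, mβ.comap (ζ i)] (x t) := by
  induction t with
  | zero => simpa only [funext hx0] using measurable_const
  | succ t ih =>
    have hle : ⨆ i ∈ Set.Iio t, mβ.comap (ζ i) ≤ ⨆ i ∈ Set.Iio (t + 1), mβ.comap (ζ i) :=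
      biSup_mono fun i hi => Nat.lt_succ_of_lt hi
    have hζt : Measurable[⨆ i ∈ Set.Iio (t + 1), mβ.comap (ζ i)] (ζ t) :=
      Measurable.of_comap_le (le_iSup₂_of_le t (Nat.lt_succ_self t) le_rfl)
    rw [funext (hrec t)]
    exact (hF t).comp ((ih.mono hle le_rfl).prodMk hζt)

theorem Matrix.measurable_add_mulVec {α ι : Type*} [MeasurableSpace α] [Fintype ι]
    {b : α → ι → ℝ} (hb : Measurable b) {A : α → Matrix ι ι ℝ}
    (hA : Measurable fun a (i j : ι) => A a i j) :
    Measurable fun p : α × (ι → ℝ) => b p.1 + A p.1 *ᵥ p.2 := by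
  unfold mulVec dotProduct
  fun_prop

theorem Matrix.map_add_mulVec_absolutelyContinuous {ι : Type*} [Fintype ι] [DecidableEq ι]
    (μ : Measure (ι → ℝ)) [μ.IsAddHaarMeasure] (c : ι → ℝ) {A : Matrix ι ι ℝ}
    (hA : IsUnit A.det) : μ.map (fun v => c + A *ᵥ v) ≪ μ := by
  have hmeas : Measurable fun v => c + A *ᵥ v := by
    unfold mulVec dotProduct
    fun_prop
  refine Measure.AbsolutelyContinuous.mk fun S hS hS0 => ?_
  rw [Measure.map_apply hmeas hS, addHaar_preimage_add_mulVec μ c hA S, hS0, mul_zero]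

theorem ProbabilityTheory.IndepFun.map_add_mulVec_absolutelyContinuous {Ω α ι : Type*}
    [MeasurableSpace Ω] [MeasurableSpace α] [Fintype ι] [DecidableEq ι]
    {P : Measure Ω} [IsFiniteMeasure P] {X : Ω → α} {Z : Ω → ι → ℝ} (hXZ : IndepFun X Z P)
    (hX : Measurable X) (hZ : Measurable Z) (hZac : P.map Z ≪ volume)
    {b : α → ι → ℝ} (hb : Measurable b) {A : α → Matrix ι ι ℝ}
    (hA : Measurable fun a (i j : ι) => A a i j) (hAinv : ∀ᵐ a ∂P.map X, IsUnit (A a).det) :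
    P.map (fun ω => b (X ω) + A (X ω) *ᵥ Z ω) ≪ volume := by
  have hg := measurable_add_mulVec hb hA
  refine hXZ.map_absolutelyContinuous hX hZ hg (hAinv.mono fun a ha => ?_)
  have hga : Measurable fun v => b a + A a *ᵥ v := hg.comp measurable_prodMk_left
  exact (hZac.map hga).trans
    (Matrix.map_add_mulVec_absolutelyContinuous volume (b a) ha)

theorem stmt_5_general (d : ℕ) (x₀ : Fin d → ℝ)
    {Ω : Type*} [MeasurableSpace Ω] (P : Measure Ω) [IsProbabilityMeasure P]
    (ζ : ℕ → Ω → (Fin d → ℝ)) (hζm : ∀ t, Measurable (ζ t))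
    (hζlaw : ∀ t, Measure.map (ζ t) P = Measure.pi fun _ : Fin d => gaussianReal 0 1)
    (hζindep : iIndepFun ζ P)
    (f : ℕ → (Fin d → ℝ) → (Fin d → ℝ)) (hf : ∀ t, Measurable (f t))
    (σ : ℕ → (Fin d → ℝ) → Matrix (Fin d) (Fin d) ℝ)
    (hσm : ∀ t, Measurable fun (x : Fin d → ℝ) (i j : Fin d) => σ t x i j)
    (hσ0 : IsUnit (σ 0 x₀).det)
    (hσt : ∀ t : ℕ, 1 ≤ t → volume {x : Fin d → ℝ | ¬ IsUnit (σ t x).det} = 0)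
    (x : ℕ → Ω → (Fin d → ℝ))
    (hx0 : ∀ ω, x 0 ω = x₀)
    (hxrec : ∀ t ω, x (t + 1) ω = f t (x t ω) + (σ t (x t ω)).mulVec (ζ t ω)) :
    ∀ t : ℕ, 1 ≤ t →
      (Measure.map (x t) P).AbsolutelyContinuous volume ∧
        ∀ S₀ : Set (Fin d → ℝ), MeasurableSet S₀ → volume S₀ = 0 →
          P {ω | x t ω ∈ S₀} = 0 := by
  have hx_adapted := measurable_iSup_comap_of_recursion
    (fun t => measurable_add_mulVec (hf t) (hσm t)) x₀ hx0 hxrec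
  have hxm : ∀ t, Measurable (x t) := fun t =>
    (hx_adapted t).mono (iSup₂_le fun i _ => (hζm i).comap_le) le_rfl
  have hζac : ∀ t, P.map (ζ t) ≪ volume := fun t => by
    rw [hζlaw t, volume_pi]
    exact Measure.AbsolutelyContinuous.pi_fin fun _ =>
      gaussianReal_absolutelyContinuous 0 one_ne_zero
  have hnext : ∀ t, (∀ᵐ y ∂P.map (x t), IsUnit (σ t y).det) → P.map (x (t + 1)) ≪ volume :=
    fun t h => by
      rw [funext (hxrec t)]
      exact (hζindep.indepFun_of_measurable_iSup hζm Set.self_notMem_Iio (hx_adapted t))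
        |>.map_add_mulVec_absolutelyContinuous (hxm t) (hζm t) (hζac t) (hf t) (hσm t) h
  have hac : ∀ t, P.map (x (t + 1)) ≪ volume := by
    intro t
    induction t with
    | zero =>
      refine hnext 0 ?_
      rw [funext hx0, Measure.map_const, measure_univ, one_smul, ae_dirac_eq]
      exact hσ0
    | succ t ih => exact hnext (t + 1) (ae_iff.2 (ih (hσt (t + 1) t.succ_pos)))
  intro t ht
  obtain ⟨t, rfl⟩ := Nat.exists_eq_add_of_le' ht
  refine ⟨hac t, fun S hS hS0 => ?_⟩
  exact (Measure.map_apply (hxm (t + 1)) hS).symm.trans (hac t hS0)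

/-- For the stochastic recursion `x_{t+1} = f_t(x_t) + σ_t(x_t) ζ_t` driven by i.i.d.
standard Gaussian vectors, with `σ₀(x₀)` invertible and each `σ_t` (t ≥ 1) invertible
outside a Lebesgue-null set, the law of `x_t` for `t ≥ 1` is absolutely continuous w.r.t.
Lebesgue measure; in particular `x_t` hits every Lebesgue-null Borel set with
probability zero. -/
theorem stmt_5 (d : ℕ) (hd : 1 ≤ d) (x₀ : Fin d → ℝ)
    {Ω : Type*} [MeasurableSpace Ω] (P : Measure Ω) [IsProbabilityMeasure P]
    (ζ : ℕ → Ω → (Fin d → ℝ)) (hζm : ∀ t, Measurable (ζ t))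
    (hζlaw : ∀ t, Measure.map (ζ t) P = Measure.pi fun _ : Fin d => gaussianReal 0 1)
    (hζindep : iIndepFun ζ P)
    (f : ℕ → (Fin d → ℝ) → (Fin d → ℝ)) (hf : ∀ t, Measurable (f t))
    (σ : ℕ → (Fin d → ℝ) → Matrix (Fin d) (Fin d) ℝ)
    (hσm : ∀ t, Measurable fun (x : Fin d → ℝ) (i j : Fin d) => σ t x i j)
    (hσ0 : IsUnit (σ 0 x₀).det)
    (hσt : ∀ t : ℕ, 1 ≤ t → volume {x : Fin d → ℝ | ¬ IsUnit (σ t x).det} = 0)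
    (x : ℕ → Ω → (Fin d → ℝ))
    (hx0 : ∀ ω, x 0 ω = x₀)
    (hxrec : ∀ t ω, x (t + 1) ω = f t (x t ω) + (σ t (x t ω)).mulVec (ζ t ω)) :
    ∀ t : ℕ, 1 ≤ t →
      (Measure.map (x t) P).AbsolutelyContinuous volume ∧
        ∀ S₀ : Set (Fin d → ℝ), MeasurableSet S₀ → volume S₀ = 0 →
          P {ω | x t ω ∈ S₀} = 0 :=
  stmt_5_general d x₀ P ζ hζm hζlaw hζindep f hf σ hσm hσ0 hσt x hx0 hxrec
end
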